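/- For the system ρ̇ = A ρ^{q-1} sin(qφ), φ̇ = μ + Ψ₁ρ² + A ρ^{q-2} cos(qφ) with Ψ(ρ)=Ψ₁ρ², q ≥ 5, A Ψ₁ > 0, and μ Ψ₁ < 0 with |μ| sufficiently small, there exist exactly 2q equilibria with ρ > 0 in the region ρ ∈ (0, δ) for suitable δ: for each of the 2q values φ with sin(qφ) = 0 there is exactly one ρ > 0 solving μ + Ψ₁ρ² + A ρ^{q-2} cos(qφ) = 0 near ρ = √(−μ/Ψ₁). -/

import Mathlib

/-!
Write the equation as `Ψ ρ² + B ρⁿ = y` with `n = q - 2 ≥ 3`, `B = ±A` and `y = -μ`, after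
changing all signs if `Ψ < 0`. Since `|B ρⁿ| ≤ |B| δ ρ²` on `[0, δ]`, for `δ` small (uniformly
in `|B| ≤ K`) the left side is strictly increasing on `[0, δ]` (its derivative times `ρ` is
`2Ψρ² + nBρⁿ > 0`) and reaches at least `Ψ δ² / 2` at `δ`. The intermediate value theorem then
gives exactly one root in `(0, δ)` for every `0 < y < Ψ δ² / 2`.
-/

open Set

lemma abs_mul_pow_le_mul_sq {B x δ : ℝ} {n : ℕ} (hn : 3 ≤ n) (hx : 0 ≤ x) (hxδ : x ≤ δ)
    (hδ : δ ≤ 1) : |B * x ^ n| ≤ |B| * δ * x ^ 2 := by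
  have hpow : x ^ n ≤ δ * x ^ 2 :=
    calc x ^ n ≤ x ^ 3 := pow_le_pow_of_le_one hx (hxδ.trans hδ) hn
      _ = x * x ^ 2 := by ring
      _ ≤ δ * x ^ 2 := by gcongr
  rw [abs_mul, abs_of_nonneg (pow_nonneg hx n), mul_assoc]
  gcongr

lemma StrictMonoOn.existsUnique_mem_Ioo_eq {f : ℝ → ℝ} {a b y : ℝ} (hab : a ≤ b)
    (hmono : StrictMonoOn f (Icc a b)) (hcont : ContinuousOn f (Icc a b))
    (hy : y ∈ Ioo (f a) (f b)) : ∃! x, x ∈ Ioo a b ∧ f x = y := by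
  obtain ⟨x, hx, hfx⟩ := intermediate_value_Ioo hab hcont hy
  exact ⟨x, ⟨hx, hfx⟩, fun x' ⟨hx', hfx'⟩ =>
    hmono.injOn (Ioo_subset_Icc_self hx') (Ioo_subset_Icc_self hx) (hfx'.trans hfx.symm)⟩

variable {Ψ B δ : ℝ} {n : ℕ}

lemma strictMonoOn_quad_add_pow (hn : 3 ≤ n) (hδ : δ ≤ 1) (hB : n * |B| * δ < 2 * Ψ) :
    StrictMonoOn (fun ρ => Ψ * ρ ^ 2 + B * ρ ^ n) (Icc 0 δ) := by
  refine strictMonoOn_of_deriv_pos (convex_Icc 0 δ) (by fun_prop) fun x hx => ?_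
  rw [interior_Icc] at hx
  have hderiv : HasDerivAt (fun ρ => Ψ * ρ ^ 2 + B * ρ ^ n)
      (Ψ * (2 * x ^ 1) + B * (n * x ^ (n - 1))) x :=
    ((hasDerivAt_pow 2 x).const_mul Ψ).add ((hasDerivAt_pow n x).const_mul B)
  have hx_mul : x * (Ψ * (2 * x ^ 1) + B * (n * x ^ (n - 1)))
      = 2 * Ψ * x ^ 2 + n * (B * x ^ n) := by
    rw [← mul_pow_sub_one (by omega : n ≠ 0) x]; ring
  have hsmall := abs_le.1 (abs_mul_pow_le_mul_sq (B := B) hn hx.1.le hx.2.le hδ)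
  rw [hderiv.deriv]
  refine pos_of_mul_pos_right ?_ hx.1.le
  rw [hx_mul]
  have hx2 : 0 < x ^ 2 := by have := hx.1; positivity
  nlinarith

lemma half_mul_sq_le_quad_add_pow (hn : 3 ≤ n) (hδ0 : 0 ≤ δ) (hδ : δ ≤ 1)
    (hB : 2 * |B| * δ ≤ Ψ) : Ψ / 2 * δ ^ 2 ≤ Ψ * δ ^ 2 + B * δ ^ n := by
  have hsmall := abs_le.1 (abs_mul_pow_le_mul_sq (B := B) hn hδ0 le_rfl hδ)
  nlinarith

lemma existsUnique_quad_add_pow_eq_of_small (hΨ : 0 < Ψ) (hn : 3 ≤ n) (K : ℝ) :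
    ∃ δ > 0, ∃ y₀ > 0, ∀ B, |B| ≤ K → ∀ y ∈ Ioo 0 y₀,
      ∃! ρ, ρ ∈ Ioo 0 δ ∧ Ψ * ρ ^ 2 + B * ρ ^ n = y := by
  obtain ⟨c, hc, hcK⟩ := exists_pos_mul_lt hΨ (n * K)
  have hδ0 : 0 < min 1 c := lt_min one_pos hc
  refine ⟨min 1 c, hδ0, Ψ / 2 * min 1 c ^ 2, by positivity, fun B hB y hy => ?_⟩
  have hK : 0 ≤ K := (abs_nonneg B).trans hB
  have hBδ : n * |B| * min 1 c < Ψ :=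
    calc n * |B| * min 1 c ≤ n * K * c := by gcongr; exact min_le_right _ _
      _ < Ψ := hcK
  have h2n : (2 : ℝ) ≤ n := by exact_mod_cast (by omega : 2 ≤ n)
  have hf0 : Ψ * 0 ^ 2 + B * 0 ^ n = 0 := by simp [zero_pow (by omega : n ≠ 0)]
  refine (strictMonoOn_quad_add_pow hn (min_le_left _ _) (by linarith)).existsUnique_mem_Ioo_eq
    hδ0.le (by fun_prop) ⟨by rw [hf0]; exact hy.1, hy.2.trans_le ?_⟩
  refine half_mul_sq_le_quad_add_pow hn hδ0.le (min_le_left _ _) (le_of_lt ?_)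
  calc 2 * |B| * min 1 c ≤ n * |B| * min 1 c := by gcongr
    _ < Ψ := hBδ

/-- For `q ≥ 5`, `A Ψ₁ > 0`, there are `δ > 0` and `μ₀ > 0` such that for every
`μ` with `μ Ψ₁ < 0` and `|μ| < μ₀` and each sign `c = ±1`, the equation
`μ + Ψ₁ ρ² + A ρ^(q-2) c = 0` has exactly one solution `ρ ∈ (0, δ)`
(so the system has exactly `2q` nonzero equilibria: one such `ρ` for each of
the `2q` angles `φ` with `sin(qφ) = 0`). -/
theorem resonance_equilibria_count (q : ℕ) (hq : 5 ≤ q) (A Ψ₁ : ℝ)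
    (hAΨ : 0 < A * Ψ₁) :
    ∃ δ > 0, ∃ μ₀ > 0, ∀ μ : ℝ, μ * Ψ₁ < 0 → |μ| < μ₀ →
      ∀ c : ℝ, c = 1 ∨ c = -1 →
        ∃! ρ : ℝ, ρ ∈ Set.Ioo 0 δ ∧ μ + Ψ₁ * ρ ^ 2 + A * ρ ^ (q - 2) * c = 0 := by
  have hΨ₁ : Ψ₁ ≠ 0 := right_ne_zero_of_mul hAΨ.ne'
  obtain ⟨δ, hδ, μ₀, hμ₀, H⟩ :=
    existsUnique_quad_add_pow_eq_of_small (abs_pos.2 hΨ₁) (by omega : 3 ≤ q - 2) |A|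
  refine ⟨δ, hδ, μ₀, hμ₀, fun μ hμΨ hμ c hc => ?_⟩
  have hAc : |A * c| = |A| := by rcases hc with rfl | rfl <;> simp
  rcases hΨ₁.lt_or_gt with hneg | hpos
  · rw [abs_of_neg hneg] at H
    have hμ_pos : 0 < μ := pos_of_mul_neg_left hμΨ hneg.le
    refine (existsUnique_congr fun ρ => and_congr_right fun _ => ?_).1
      (H (-(A * c)) (by rw [abs_neg, hAc]) μ ⟨hμ_pos, (abs_of_pos hμ_pos) ▸ hμ⟩)
    constructor <;> intro h <;> linarith
  · rw [abs_of_pos hpos] at H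
    have hμ_neg : μ < 0 := neg_of_mul_neg_left hμΨ hpos.le
    refine (existsUnique_congr fun ρ => and_congr_right fun _ => ?_).1
      (H (A * c) hAc.le (-μ) ⟨neg_pos.2 hμ_neg, (abs_of_neg hμ_neg) ▸ hμ⟩)
    constructor <;> intro h <;> linarith
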